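/- Let U ⊂ ℝ^N be a Lebesgue-measurable set of finite measure |U|, let σ > 0, and let u, v : U → ℝ be measurable functions such that |u·v|^{σ+1} is integrable on U. Then ∫_U |u(x)|^σ · |v(x)|^σ · |log|u(x)·v(x)|| dx ≤ |U|/(σ·e) + (1/e)·∫_U |u(x)·v(x)|^{σ+1} dx, where the integrand on the left is interpreted as 0 at points where u(x)·v(x) = 0 and e = exp(1). -/

import Mathlib

/-! Both signs of `log t` are controlled by `log x ≤ x / e`: applied to `x = t^(-σ)` it gives
`t^σ (-log t) ≤ 1 / (σ e)`, applied to `x = t` it gives `t^σ log t ≤ t^(σ+1) / e`. Hence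
`t^σ |log t| ≤ 1 / (σ e) + t^(σ+1) / e` for all `t ≥ 0`; take `t = |u v|` and integrate over `U`. -/

open MeasureTheory

namespace Real

theorem log_le_div_exp_one {x : ℝ} (hx : 0 ≤ x) : log x ≤ x / exp 1 := by
  rcases hx.eq_or_lt with rfl | hx
  · simp
  rw [le_div_iff₀' (exp_pos 1)]
  simpa [exp_log hx] using exp_one_mul_le_exp (x := log x)

theorem rpow_mul_neg_log_le {σ t : ℝ} (hσ : 0 < σ) (ht : 0 ≤ t) :
    t ^ σ * -log t ≤ 1 / (σ * exp 1) := by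
  rcases ht.eq_or_lt with rfl | ht
  · simp only [zero_rpow hσ.ne', zero_mul]
    positivity
  have key : -σ * log t ≤ t ^ (-σ) / exp 1 := by
    rw [← log_rpow ht]
    exact log_le_div_exp_one (rpow_nonneg ht.le _)
  have hcancel : t ^ σ * t ^ (-σ) = 1 := by
    rw [← rpow_add ht, add_neg_cancel, rpow_zero]
  rw [le_div_iff₀ (by positivity)]
  calc t ^ σ * -log t * (σ * exp 1) = t ^ σ * (-σ * log t) * exp 1 := by ring
    _ ≤ t ^ σ * (t ^ (-σ) / exp 1) * exp 1 := by gcongr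
    _ = 1 := by rw [mul_div_assoc', hcancel, div_mul_cancel₀ _ (exp_pos 1).ne']

theorem rpow_mul_log_le (σ : ℝ) {t : ℝ} (ht : 0 ≤ t) :
    t ^ σ * log t ≤ t ^ (σ + 1) / exp 1 := by
  rcases ht.eq_or_lt with rfl | ht
  · simp only [log_zero, mul_zero]
    positivity
  rw [rpow_add_one ht.ne', mul_div_assoc]
  exact mul_le_mul_of_nonneg_left (log_le_div_exp_one ht.le) (rpow_nonneg ht.le σ)

theorem rpow_mul_abs_log_le {σ t : ℝ} (hσ : 0 < σ) (ht : 0 ≤ t) :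
    t ^ σ * |log t| ≤ 1 / (σ * exp 1) + t ^ (σ + 1) / exp 1 := by
  have h₁ : 0 ≤ 1 / (σ * exp 1) := by positivity
  have h₂ : 0 ≤ t ^ (σ + 1) / exp 1 := by positivity
  rcases abs_cases (log t) with ⟨habs, -⟩ | ⟨habs, -⟩ <;> rw [habs]
  · linarith [rpow_mul_log_le σ ht]
  · linarith [rpow_mul_neg_log_le hσ ht]

end Real

theorem setIntegral_rpow_mul_abs_log_le {α : Type*} [MeasurableSpace α] {μ : Measure α}
    {s : Set α} (hs : μ s ≠ ⊤) {σ : ℝ} (hσ : 0 < σ) {f : α → ℝ}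
    (hf : IntegrableOn (fun x => |f x| ^ (σ + 1)) s μ) :
    ∫ x in s, |f x| ^ σ * |Real.log (|f x|)| ∂μ ≤
      μ.real s / (σ * Real.exp 1) + (1 / Real.exp 1) * ∫ x in s, |f x| ^ (σ + 1) ∂μ := by
  have hconst : IntegrableOn (fun _ => 1 / (σ * Real.exp 1)) s μ := integrableOn_const hs
  have hbound : IntegrableOn
      (fun x => 1 / (σ * Real.exp 1) + |f x| ^ (σ + 1) / Real.exp 1) s μ :=
    hconst.add (hf.div_const _)
  calc ∫ x in s, |f x| ^ σ * |Real.log (|f x|)| ∂μ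
      ≤ ∫ x in s, (1 / (σ * Real.exp 1) + |f x| ^ (σ + 1) / Real.exp 1) ∂μ :=
        integral_mono_of_nonneg (.of_forall fun _ => by positivity) hbound
          (.of_forall fun x => Real.rpow_mul_abs_log_le hσ (abs_nonneg (f x)))
    _ = μ.real s / (σ * Real.exp 1) + (1 / Real.exp 1) * ∫ x in s, |f x| ^ (σ + 1) ∂μ := by
        rw [integral_add hconst (hf.div_const _), setIntegral_const,
          integral_div, smul_eq_mul]
        ring

theorem log_term_apriori_estimate_general (N : ℕ) (U : Set (Fin N → ℝ))
    (hUfin : volume U < ⊤)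
    (σ : ℝ) (hσ : 0 < σ)
    (u v : (Fin N → ℝ) → ℝ)
    (hint : IntegrableOn (fun x => |u x * v x| ^ (σ + 1)) U) :
    (∫ x in U, |u x| ^ σ * |v x| ^ σ * |Real.log (|u x * v x|)|) ≤
      (volume U).toReal / (σ * Real.exp 1) +
        (1 / Real.exp 1) * ∫ x in U, |u x * v x| ^ (σ + 1) := by
  have habs : ∀ x, |u x| ^ σ * |v x| ^ σ = |u x * v x| ^ σ := fun x => by
    rw [abs_mul, Real.mul_rpow (abs_nonneg _) (abs_nonneg _)]
  simp only [habs]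
  exact setIntegral_rpow_mul_abs_log_le hUfin.ne hσ hint

/-- A priori estimate for the logarithmic term (proof of Theorem 3.2): if `U ⊂ ℝ^N`
has finite measure, `σ > 0`, and `|u v|^(σ+1)` is integrable on `U`, then
`∫_U |u|^σ |v|^σ |log|u v|| ≤ |U|/(σ e) + (1/e) ∫_U |u v|^(σ+1)`
(the integrand on the left is `0` where `u v = 0`). -/
theorem log_term_apriori_estimate (N : ℕ) (U : Set (Fin N → ℝ))
    (hU : MeasurableSet U) (hUfin : volume U < ⊤)
    (σ : ℝ) (hσ : 0 < σ)
    (u v : (Fin N → ℝ) → ℝ) (hu : Measurable u) (hv : Measurable v)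
    (hint : IntegrableOn (fun x => |u x * v x| ^ (σ + 1)) U) :
    (∫ x in U, |u x| ^ σ * |v x| ^ σ * |Real.log (|u x * v x|)|) ≤
      (volume U).toReal / (σ * Real.exp 1) +
        (1 / Real.exp 1) * ∫ x in U, |u x * v x| ^ (σ + 1) :=
  log_term_apriori_estimate_general N U hUfin σ hσ u v hint
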